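/- Let n ∈ ℕ and let U be a finite set of diagonal-normalizing partial isometries in Mₙ(ℂ) that is a graphing. Then every diagonal-normalizing partial isometry v ∈ Mₙ(ℂ) can be decomposed as follows: there exist finitely many matrices w₁, …, w_m, each of which is either the identity matrix or a product of finitely many elements of U and their conjugate-transposes, mutually orthogonal diagonal projections p₁, …, p_m with ∑_{k=1}^m p_k = v·vᴴ, and diagonal matrices a₁, …, a_m each of which is a diagonal-normalizing partial isometry, such that p_k·v = p_k·a_k·w_k for every k; in particular v = ∑_{k=1}^m p_k·a_k·w_k. -/

import Mathlib

open Matrix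

/-- A diagonal-normalizing partial isometry in `Mₙ(ℂ)`: a partial isometry `u`
such that `u d uᴴ` and `uᴴ d u` are diagonal for every diagonal matrix `d`. -/
def IsDNPI {n : ℕ} (u : Matrix (Fin n) (Fin n) ℂ) : Prop :=
  u * uᴴ * u = u ∧
    ∀ d : Matrix (Fin n) (Fin n) ℂ, d.IsDiag → (u * d * uᴴ).IsDiag ∧ (uᴴ * d * u).IsDiag

/-- A set `U` of matrices is a graphing if the star-subalgebra of `Mₙ(ℂ)` generated by the
diagonal matrices together with `U` is all of `Mₙ(ℂ)`. -/
def IsGraphing {n : ℕ} (U : Set (Matrix (Fin n) (Fin n) ℂ)) : Prop :=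
  StarAlgebra.adjoin ℂ ({d : Matrix (Fin n) (Fin n) ℂ | d.IsDiag} ∪ U) = ⊤

/-- The evaluation of a word: each letter is a matrix together with a Boolean indicating
whether the letter is the matrix itself (`true`) or its conjugate-transpose (`false`). -/
noncomputable def wordEval {n : ℕ} (w : List (Matrix (Fin n) (Fin n) ℂ × Bool)) :
    Matrix (Fin n) (Fin n) ℂ :=
  (w.map fun p => if p.2 then p.1 else p.1ᴴ).prod

/-- A formally reduced word in `U`: a nonempty sequence of letters `(uᵢ, εᵢ)` with `uᵢ ∈ U`,
such that no letter is immediately followed by the same matrix with the opposite exponent. -/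
def IsReducedWord {n : ℕ} (U : Set (Matrix (Fin n) (Fin n) ℂ))
    (w : List (Matrix (Fin n) (Fin n) ℂ × Bool)) : Prop :=
  w ≠ [] ∧ (∀ p ∈ w, p.1 ∈ U) ∧
    List.Chain' (fun a b => ¬(b.1 = a.1 ∧ b.2 ≠ a.2)) w

/-- `U` is a treeing if the evaluation of every formally reduced word in `U` has all diagonal
entries equal to `0`. -/
def IsTreeing {n : ℕ} (U : Set (Matrix (Fin n) (Fin n) ℂ)) : Prop :=
  ∀ w, IsReducedWord U w → ∀ i, wordEval w i i = 0

/-- `x` is the identity matrix or a product of finitely many elements of `U` and their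
conjugate-transposes, i.e. the product of a (possibly empty) list of letters from
`U ∪ Uᴴ`. -/
def IsWordOn {n : ℕ} (U : Set (Matrix (Fin n) (Fin n) ℂ))
    (x : Matrix (Fin n) (Fin n) ℂ) : Prop :=
  ∃ l : List (Matrix (Fin n) (Fin n) ℂ),
    (∀ y ∈ l, y ∈ U ∨ ∃ u ∈ U, y = uᴴ) ∧ x = l.prod

section Aux
variable {n : ℕ}

lemma isDiag_stdBasisMatrix (i : Fin n) (c : ℂ) : (Matrix.single i i c).IsDiag := by
  intro a b hab
  simp only [Matrix.single, of_apply]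
  rw [if_neg]
  rintro ⟨rfl, rfl⟩; exact hab rfl

lemma IsDiag.comm {d e : Matrix (Fin n) (Fin n) ℂ} (hd : d.IsDiag) (he : e.IsDiag) :
    d * e = e * d := by
  rw [← hd.diagonal_diag, ← he.diagonal_diag, diagonal_mul_diagonal, diagonal_mul_diagonal]
  exact congrArg diagonal (funext fun i => mul_comm _ _)

lemma IsDNPI.row_unique {u : Matrix (Fin n) (Fin n) ℂ} (hu : IsDNPI u) {i j j' : Fin n}
    (h : u i j ≠ 0) (h' : u i j' ≠ 0) : j = j' := by
  by_contra hne
  have hd : ((uᴴ * Matrix.single i i 1 * u : Matrix (Fin n) (Fin n) ℂ)) j j' = 0 :=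
    (hu.2 (Matrix.single i i 1) (isDiag_stdBasisMatrix i 1)).2 hne
  have : ((uᴴ * Matrix.single i i 1 * u : Matrix (Fin n) (Fin n) ℂ)) j j' = star (u i j) * u i j' := by
    rw [Matrix.mul_assoc, mul_apply]
    rw [Finset.sum_eq_single i]
    · simp [conjTranspose_apply]
    · intro b _ hb
      simp [hb]
    · simp
  rw [this] at hd
  rcases mul_eq_zero.1 hd with h0 | h0
  · exact h (by simpa using h0)
  · exact h' h0

lemma IsDNPI.col_unique {u : Matrix (Fin n) (Fin n) ℂ} (hu : IsDNPI u) {i i' j : Fin n}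
    (h : u i j ≠ 0) (h' : u i' j ≠ 0) : i = i' := by
  by_contra hne
  have hd : ((u * Matrix.single j j 1 * uᴴ : Matrix (Fin n) (Fin n) ℂ)) i i' = 0 :=
    (hu.2 (Matrix.single j j 1) (isDiag_stdBasisMatrix j 1)).1 hne
  have : ((u * Matrix.single j j 1 * uᴴ : Matrix (Fin n) (Fin n) ℂ)) i i' = u i j * star (u i' j) := by
    rw [Matrix.mul_assoc, mul_apply]
    rw [Finset.sum_eq_single j]
    · simp [conjTranspose_apply]
    · intro b _ hb
      simp [hb]
    · simp
  rw [this] at hd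
  rcases mul_eq_zero.1 hd with h0 | h0
  · exact h h0
  · exact h' (by simpa using h0)

lemma IsDNPI.mul_conjTranspose_isDiag {u : Matrix (Fin n) (Fin n) ℂ} (hu : IsDNPI u) :
    (u * uᴴ).IsDiag := by
  have := (hu.2 1 isDiag_one).1
  simpa using this

lemma IsDNPI.conjTranspose_mul_isDiag {u : Matrix (Fin n) (Fin n) ℂ} (hu : IsDNPI u) :
    (uᴴ * u).IsDiag := by
  have := (hu.2 1 isDiag_one).2
  simpa using this

lemma IsDNPI.entry_mul_star {u : Matrix (Fin n) (Fin n) ℂ} (hu : IsDNPI u) {i j : Fin n}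
    (h : u i j ≠ 0) : u i j * star (u i j) = 1 := by
  have h1 : (u * uᴴ * u) i j = u i j := by rw [hu.1]
  have h2 : (u * uᴴ * u) i j = (u * uᴴ) i i * u i j := by
    rw [mul_apply, Finset.sum_eq_single i]
    · intro b _ hb
      rw [hu.mul_conjTranspose_isDiag hb.symm, zero_mul]
    · simp
  have h3 : (u * uᴴ) i i = u i j * star (u i j) := by
    rw [mul_apply, Finset.sum_eq_single j]
    · simp [conjTranspose_apply]
    · intro b _ hb
      by_cases hb0 : u i b = 0
      · simp [hb0]
      · exact absurd (hu.row_unique hb0 h) hb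
    · simp
  have := h1 ▸ h2
  rw [h3] at this
  exact mul_right_cancel₀ h (by rw [← this, one_mul])

lemma IsDNPI.one : IsDNPI (1 : Matrix (Fin n) (Fin n) ℂ) := by
  refine ⟨by simp, fun d hd => ?_⟩
  constructor <;> simpa

lemma IsDNPI.star {u : Matrix (Fin n) (Fin n) ℂ} (hu : IsDNPI u) : IsDNPI uᴴ := by
  constructor
  · rw [conjTranspose_conjTranspose]
    calc uᴴ * u * uᴴ = (u * uᴴ * u)ᴴ := by simp [conjTranspose_mul, Matrix.mul_assoc]
    _ = uᴴ := by rw [hu.1]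
  · intro d hd
    rw [conjTranspose_conjTranspose]
    exact ⟨(hu.2 d hd).2, (hu.2 d hd).1⟩

lemma IsDNPI.mul {u w : Matrix (Fin n) (Fin n) ℂ} (hu : IsDNPI u) (hw : IsDNPI w) :
    IsDNPI (u * w) := by
  constructor
  · calc (u * w) * (u * w)ᴴ * (u * w) = u * ((w * wᴴ) * (uᴴ * u)) * w := by
          simp only [conjTranspose_mul, Matrix.mul_assoc]
    _ = u * ((uᴴ * u) * (w * wᴴ)) * w := by
          rw [IsDiag.comm hw.mul_conjTranspose_isDiag hu.conjTranspose_mul_isDiag]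
    _ = (u * uᴴ * u) * (w * wᴴ * w) := by simp only [Matrix.mul_assoc]
    _ = u * w := by rw [hu.1, hw.1]
  · intro d hd
    constructor
    · have he : (u * w) * d * (u * w)ᴴ = u * (w * d * wᴴ) * uᴴ := by
        simp only [conjTranspose_mul, Matrix.mul_assoc]
      rw [he]
      exact (hu.2 _ (hw.2 d hd).1).1
    · have he : (u * w)ᴴ * d * (u * w) = wᴴ * (uᴴ * d * u) * w := by
        simp only [conjTranspose_mul, Matrix.mul_assoc]
      rw [he]
      have := ((hw.star).2 _ (hu.2 d hd).2).1
      rwa [conjTranspose_conjTranspose] at this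

lemma isDNPI_of_isWordOn {U : Set (Matrix (Fin n) (Fin n) ℂ)} (hU : ∀ u ∈ U, IsDNPI u)
    {x : Matrix (Fin n) (Fin n) ℂ} (hx : IsWordOn U x) : IsDNPI x := by
  obtain ⟨l, hl, rfl⟩ := hx
  induction l with
  | nil => simpa using IsDNPI.one
  | cons a l ih =>
    rw [List.prod_cons]
    have ha : IsDNPI a := by
      rcases hl a (by simp) with h | ⟨u, hu, rfl⟩
      · exact hU a h
      · exact (hU u hu).star
    exact ha.mul (ih fun y hy => hl y (by simp [hy]))

lemma conjTranspose_list_prod (l : List (Matrix (Fin n) (Fin n) ℂ)) :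
    (l.prod)ᴴ = (l.reverse.map conjTranspose).prod := by
  induction l with
  | nil => simp
  | cons a l ih => simp [List.prod_cons, conjTranspose_mul, ih, List.prod_append]

lemma IsWordOn.one {U : Set (Matrix (Fin n) (Fin n) ℂ)} : IsWordOn U 1 :=
  ⟨[], by simp, by simp⟩

lemma IsWordOn.mul {U : Set (Matrix (Fin n) (Fin n) ℂ)} {x y : Matrix (Fin n) (Fin n) ℂ}
    (hx : IsWordOn U x) (hy : IsWordOn U y) : IsWordOn U (x * y) := by
  obtain ⟨lx, hlx, rfl⟩ := hx
  obtain ⟨ly, hly, rfl⟩ := hy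
  refine ⟨lx ++ ly, ?_, by rw [List.prod_append]⟩
  intro z hz
  rcases List.mem_append.1 hz with h | h
  · exact hlx z h
  · exact hly z h

lemma IsWordOn.star {U : Set (Matrix (Fin n) (Fin n) ℂ)} {x : Matrix (Fin n) (Fin n) ℂ}
    (hx : IsWordOn U x) : IsWordOn U xᴴ := by
  obtain ⟨l, hl, rfl⟩ := hx
  refine ⟨l.reverse.map conjTranspose, ?_, (conjTranspose_list_prod l)⟩
  intro z hz
  obtain ⟨y, hy, rfl⟩ := List.mem_map.1 hz
  rcases hl y (List.mem_reverse.1 hy) with h | ⟨u, hu, rfl⟩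
  · exact Or.inr ⟨y, h, rfl⟩
  · exact Or.inl (by rwa [conjTranspose_conjTranspose])

lemma exists_word_entry_ne_zero {U : Set (Matrix (Fin n) (Fin n) ℂ)} (hU : ∀ u ∈ U, IsDNPI u)
    (hg : IsGraphing U) (i j : Fin n) : ∃ x, IsWordOn U x ∧ x i j ≠ 0 := by
  classical
  set Rel : Fin n → Fin n → Prop := fun i j => ∃ x, IsWordOn U x ∧ x i j ≠ 0 with hRel
  have htrans : ∀ i k j, Rel i k → Rel k j → Rel i j := by
    rintro i k j ⟨x, hx, hxik⟩ ⟨y, hy, hykj⟩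
    refine ⟨x * y, hx.mul hy, ?_⟩
    have hxd := isDNPI_of_isWordOn hU hx
    rw [mul_apply, Finset.sum_eq_single k]
    · exact mul_ne_zero hxik hykj
    · intro b _ hb
      by_cases hx0 : x i b = 0
      · rw [hx0, zero_mul]
      · exact absurd (hxd.row_unique hx0 hxik) hb
    · simp
  have hrefl : ∀ i, Rel i i := fun i => ⟨1, IsWordOn.one, by simp⟩
  have hsymm : ∀ i j, Rel i j → Rel j i := by
    rintro i j ⟨x, hx, hxij⟩
    exact ⟨xᴴ, hx.star, by simpa [conjTranspose_apply] using hxij⟩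
  let T : StarSubalgebra ℂ (Matrix (Fin n) (Fin n) ℂ) :=
    { carrier := {x | ∀ i j, ¬ Rel i j → x i j = 0}
      mul_mem' := by
        intro x y hx hy i j hij
        rw [mul_apply]
        apply Finset.sum_eq_zero
        intro k _
        by_cases h1 : Rel i k
        · by_cases h2 : Rel k j
          · exact absurd (htrans i k j h1 h2) hij
          · rw [hy k j h2, mul_zero]
        · rw [hx i k h1, zero_mul]
      one_mem' := by
        intro i j hij
        have hne : i ≠ j := fun h => hij (h ▸ hrefl i)
        exact one_apply_ne hne
      add_mem' := by
        intro x y hx hy i j hij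
        show x i j + y i j = 0
        rw [hx i j hij, hy i j hij, add_zero]
      zero_mem' := by intro i j hij; rfl
      algebraMap_mem' := by
        intro c i j hij
        have hne : i ≠ j := fun h => hij (h ▸ hrefl i)
        simp [Matrix.algebraMap_matrix_apply, hne]
      star_mem' := by
        intro x hx i j hij
        show star (x j i) = 0
        rw [hx j i (fun h => hij (hsymm j i h)), star_zero] }
  have hle : StarAlgebra.adjoin ℂ ({d : Matrix (Fin n) (Fin n) ℂ | d.IsDiag} ∪ U) ≤ T := by
    apply StarAlgebra.adjoin_le
    rintro x (hx | hx)
    · intro i j hij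
      rcases eq_or_ne i j with rfl | hne
      · exact absurd (hrefl i) hij
      · exact hx hne
    · intro i j hij
      by_contra h0
      exact hij ⟨x, ⟨[x], by simp [hx], by simp⟩, h0⟩
  rw [hg] at hle
  have hmem : ∀ i' j', ¬ Rel i' j' → Matrix.single i j (1 : ℂ) i' j' = 0 :=
    hle (by trivial : Matrix.single i j (1 : ℂ) ∈ (⊤ : StarSubalgebra ℂ _))
  by_contra hc
  push_neg at hc
  have hnr : ¬ Rel i j := by rintro ⟨x, hx1, hx2⟩; exact hx2 (hc x hx1)
  have := hmem i j hnr
  simp [Matrix.single] at this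

lemma conjTranspose_stdBasisMatrix (i : Fin n) (c : ℂ) :
    (Matrix.single i i c)ᴴ = Matrix.single i i (star c) := by
  ext r s
  simp only [conjTranspose_apply, Matrix.single, of_apply, and_comm]
  split <;> simp

lemma stdBasisMatrix_mul_isDiag (i : Fin n) (c : ℂ) {d : Matrix (Fin n) (Fin n) ℂ}
    (hd : d.IsDiag) : Matrix.single i i c * d = Matrix.single i i (c * d i i) := by
  ext r s
  by_cases hr : r = i
  · subst hr
    rw [single_mul_apply_same]
    by_cases hs : s = r
    · subst hs; simp [Matrix.single]
    · rw [hd (fun h => hs h.symm)]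
      simp only [Matrix.single, of_apply, mul_zero]
      rw [if_neg]
      rintro ⟨-, rfl⟩; exact hs rfl
  · have hr' : ¬ i = r := fun h => hr h.symm
    rw [single_mul_apply_of_ne c i i r s hr d]
    simp [Matrix.single, hr']

lemma isDNPI_stdBasisMatrix (i : Fin n) (c : ℂ) (hc : c * star c * c = c) :
    IsDNPI (Matrix.single i i c) := by
  constructor
  · rw [conjTranspose_stdBasisMatrix]
    simp only [single_mul_single_same]
    rw [hc]
  · intro d hd
    rw [conjTranspose_stdBasisMatrix, stdBasisMatrix_mul_isDiag i c hd,
      stdBasisMatrix_mul_isDiag i (star c) hd]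
    simp only [single_mul_single_same]
    exact ⟨isDiag_stdBasisMatrix _ _, isDiag_stdBasisMatrix _ _⟩

lemma key_row {U : Set (Matrix (Fin n) (Fin n) ℂ)} (hU : ∀ u ∈ U, IsDNPI u)
    (hg : IsGraphing U) {v : Matrix (Fin n) (Fin n) ℂ} (hv : IsDNPI v) (i : Fin n) :
    ∃ w p a : Matrix (Fin n) (Fin n) ℂ, IsWordOn U w ∧
      (p.IsDiag ∧ p * p = p ∧ pᴴ = p) ∧ (a.IsDiag ∧ IsDNPI a) ∧
      p * v = p * (a * w) ∧ p i i = (v * vᴴ) i i ∧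
      (∀ r s, ¬(r = i ∧ s = i) → p r s = 0) := by
  classical
  by_cases hrow : ∃ j, v i j ≠ 0
  · obtain ⟨j, hvij⟩ := hrow
    obtain ⟨w, hw, hwij⟩ := exists_word_entry_ne_zero hU hg i j
    have hwd := isDNPI_of_isWordOn hU hw
    set c : ℂ := v i j * star (w i j) with hc
    have h1 := hv.entry_mul_star hvij
    have h2 := hwd.entry_mul_star hwij
    have hcc : c * star c = 1 := by
      have he : c * star c = (v i j * star (v i j)) * (w i j * star (w i j)) := by
        rw [hc, star_mul', star_star]; ring
      rw [he, h1, h2, one_mul]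
    refine ⟨w, Matrix.single i i 1, Matrix.single i i c, hw,
      ⟨isDiag_stdBasisMatrix i 1, by simp, by rw [conjTranspose_stdBasisMatrix]; simp⟩,
      ⟨isDiag_stdBasisMatrix i c, isDNPI_stdBasisMatrix i c (by rw [hcc, one_mul])⟩,
      ?_, ?_, ?_⟩
    · have hkey : ∀ s, v i s = c * w i s := by
        intro s
        rcases eq_or_ne s j with rfl | hs
        · calc v i s = v i s * (w i s * star (w i s)) := by rw [h2, mul_one]
          _ = v i s * star (w i s) * w i s := by ring
        · have hv0 : v i s = 0 := by
            by_contra h0; exact hs (hv.row_unique h0 hvij)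
          have hw0 : w i s = 0 := by
            by_contra h0; exact hs (hwd.row_unique h0 hwij)
          rw [hv0, hw0, mul_zero]
      ext r s
      by_cases hr : r = i
      · subst hr
        rw [single_mul_apply_same, single_mul_apply_same,
          single_mul_apply_same]
        rw [one_mul, one_mul, hkey s]
      · simp [hr]
    · have he : (v * vᴴ) i i = v i j * star (v i j) := by
        rw [mul_apply, Finset.sum_eq_single j]
        · rw [conjTranspose_apply]
        · intro b _ hb
          by_cases h0 : v i b = 0
          · rw [h0, zero_mul]
          · exact absurd (hv.row_unique h0 hvij) hb
        · simp
      rw [he, h1]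
      simp [Matrix.single]
    · intro r s h
      simp only [Matrix.single, of_apply]
      rw [if_neg]
      rintro ⟨rfl, rfl⟩; exact h ⟨rfl, rfl⟩
  · push_neg at hrow
    refine ⟨1, 0, 0, IsWordOn.one, ⟨isDiag_zero, by simp, by simp⟩,
      ⟨isDiag_zero, ⟨by simp, fun d hd => by constructor <;> simp [isDiag_zero]⟩⟩,
      by simp, ?_, by simp⟩
    rw [mul_apply]
    simp [hrow, conjTranspose_apply]


end Aux

/-- If a finite set `U` of diagonal-normalizing partial isometries in `Mₙ(ℂ)` is a graphing,
then every diagonal-normalizing partial isometry `v` decomposes as `v = ∑ k, p_k · a_k · w_k`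
where the `w_k` are the identity or products of elements of `U` and their adjoints, the `p_k`
are mutually orthogonal diagonal projections summing to `v vᴴ`, the `a_k` are diagonal
matrices which are diagonal-normalizing partial isometries, and `p_k · v = p_k · a_k · w_k`
for every `k`. -/

theorem dnpi_decomposition_of_graphing {n : ℕ}
    (U : Finset (Matrix (Fin n) (Fin n) ℂ)) (hU : ∀ u ∈ U, IsDNPI u)
    (hg : IsGraphing (U : Set (Matrix (Fin n) (Fin n) ℂ)))
    (v : Matrix (Fin n) (Fin n) ℂ) (hv : IsDNPI v) :
    ∃ (m : ℕ) (w p a : Fin m → Matrix (Fin n) (Fin n) ℂ),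
      (∀ k, IsWordOn (U : Set (Matrix (Fin n) (Fin n) ℂ)) (w k)) ∧
      (∀ k, (p k).IsDiag ∧ p k * p k = p k ∧ (p k)ᴴ = p k) ∧
      (∀ k l, k ≠ l → p k * p l = 0) ∧
      (∑ k, p k) = v * vᴴ ∧
      (∀ k, (a k).IsDiag ∧ IsDNPI (a k)) ∧
      (∀ k, p k * v = p k * (a k * w k)) ∧
      v = ∑ k, p k * (a k * w k) := by
  classical
  have hU' : ∀ u ∈ (U : Set (Matrix (Fin n) (Fin n) ℂ)), IsDNPI u := fun u hu => hU u hu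
  choose w p a hw hp ha hmain hpii hpsupp using fun i : Fin n => key_row hU' hg hv i
  have horth : ∀ k l, k ≠ l → p k * p l = 0 := by
    intro k l hkl
    ext r s
    simp only [Matrix.zero_apply, mul_apply]
    apply Finset.sum_eq_zero
    intro cc _
    by_cases h1 : r = k ∧ cc = k
    · have hz : p l cc s = 0 := hpsupp l cc s (fun hh => hkl (h1.2.symm.trans hh.1))
      rw [hz, mul_zero]
    · rw [hpsupp k r cc h1, zero_mul]
  have hsum : (∑ k, p k) = v * vᴴ := by
    ext r s
    rw [Matrix.sum_apply]
    rcases eq_or_ne r s with rfl | hrs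
    · rw [Finset.sum_eq_single r]
      · exact hpii r
      · intro k _ hk
        exact hpsupp k r r (fun hh => hk (hh.1.symm))
      · simp
    · rw [hv.mul_conjTranspose_isDiag hrs]
      apply Finset.sum_eq_zero
      intro k _
      exact hpsupp k r s (fun hh => hrs (hh.1.trans hh.2.symm))
  have hfinal : v = ∑ k, p k * (a k * w k) := by
    have he : ∑ k, p k * (a k * w k) = ∑ k, p k * v :=
      Finset.sum_congr rfl fun k _ => (hmain k).symm
    rw [he, ← Finset.sum_mul, hsum]
    exact hv.1.symm
  exact ⟨n, w, p, a, hw, hp, horth, hsum, ha, hmain, hfinal⟩
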